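/- Define 𝝉 : [0,1] → [0,1] by 𝝉(x) = 6x on [0, 1/10], 𝝉(x) = 4x + 1/5 on (1/10, 1/5), and 𝝉(x) = 5x − 1 on [1/5, 2/5), 5x − 2 on [2/5, 3/5), 5x − 3 on [3/5, 4/5), 5x − 4 on [4/5, 1] (i.e. 𝝉(x) = 5x mod 1 on [1/5,1]). Let f = (30/31)·1_{[0,3/5)} + (65/62)·1_{[3/5,1]}. Then f is a probability density and the measure f·λ_Leb is invariant under 𝝉, i.e. (f·λ_Leb)(𝝉⁻¹(A)) = (f·λ_Leb)(A) for every Borel set A ⊆ [0,1]. -/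

import Mathlib

/-! Cut `[0,1)` (the point `1` is null) into the half-open pieces `[0,1/10), [1/10,1/5),
[1/5,2/5), …, [4/5,1)`. On each piece `I` the density is a constant `c` and `𝝉` is exactly affine
of slope `s`, so `𝝉` pushes `c·λ|_I` forward to `(c/s)·λ|_{𝝉 I}`. The images are `[0,3/5)`,
`[3/5,1)` and four copies of `[0,1)`, and the weights add up to `5/31 + 2·6/31 + 2·13/62 = 30/31`
on `[0,3/5)` and to `15/62 + 2·6/31 + 2·13/62 = 65/62` on `[3/5,1)`: the pushforward of `f·λ` is
`f·λ` again. -/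

open MeasureTheory Set Filter
open scoped ENNReal

/-- Lebesgue measure restricted to the unit interval `[0,1]`. -/
noncomputable def leb01 : Measure ℝ := volume.restrict (Set.Icc (0:ℝ) 1)

/-- The measure `f · λ_Leb` with density `f` with respect to Lebesgue measure on `[0,1]`. -/
noncomputable def densMeasure (f : ℝ → ℝ) : Measure ℝ :=
  leb01.withDensity (fun x => ENNReal.ofReal (f x))

/-- `f` is a probability density on `[0,1]`. -/
def IsDensity (f : ℝ → ℝ) : Prop :=
  Measurable f ∧ (∀ x, 0 ≤ f x) ∧ (∫ x in Set.Icc (0:ℝ) 1, f x = 1)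

/-- The map `x ↦ 5x mod 1` on `[1/5, 1]`, written with explicit branches. -/
noncomputable def fiveXmod1 : ℝ → ℝ := fun x =>
  if x < 2/5 then 5*x - 1 else if x < 3/5 then 5*x - 2
  else if x < 4/5 then 5*x - 3 else 5*x - 4

/-- The selector of Example 3 of the paper. -/
noncomputable def selEx3 : ℝ → ℝ := fun x =>
  if x ≤ 1/10 then 6*x else if x < 1/5 then 4*x + 1/5 else fiveXmod1 x

/-- The invariant density of the selector of Example 3 of the paper. -/
noncomputable def fEx3 : ℝ → ℝ := fun x => if x < 3/5 then 30/31 else 65/62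

lemma Real.map_volume_affine {a : ℝ} (ha : a ≠ 0) (b : ℝ) :
    volume.map (fun x => a * x + b) = ENNReal.ofReal |a⁻¹| • volume := by
  have : (fun x : ℝ => a * x + b) = (· + b) ∘ (a * ·) := rfl
  rw [this, ← Measure.map_map (measurable_add_const b) (measurable_const_mul a),
    Real.map_volume_mul_left ha, Measure.map_smul, map_add_right_eq_self]

lemma Real.map_volume_restrict_Ico_affine {a : ℝ} (ha : 0 < a) (b p q : ℝ) :
    (volume.restrict (Ico p q)).map (fun x => a * x + b) =
      ENNReal.ofReal a⁻¹ • volume.restrict (Ico (a * p + b) (a * q + b)) := by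
  have hpre : (fun x => a * x + b) ⁻¹' Ico (a * p + b) (a * q + b) = Ico p q := by
    ext x; simp [mul_le_mul_iff_right₀ ha, mul_lt_mul_iff_right₀ ha]
  rw [← hpre, ← Measure.restrict_map (by fun_prop) measurableSet_Ico,
    Real.map_volume_affine ha.ne', abs_of_pos (inv_pos.mpr ha), Measure.restrict_smul]

lemma MeasureTheory.Measure.restrict_Ico_add_restrict_Ico (μ : Measure ℝ) {a b c : ℝ}
    (hab : a ≤ b) (hbc : b ≤ c) :
    μ.restrict (Ico a b) + μ.restrict (Ico b c) = μ.restrict (Ico a c) := by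
  rw [← Measure.restrict_union Ico_disjoint_Ico_same measurableSet_Ico,
    Ico_union_Ico_eq_Ico hab hbc]

lemma MeasureTheory.Measure.map_restrict_congr {α β : Type*} [MeasurableSpace α]
    [MeasurableSpace β] {μ : Measure α} {s : Set α} {f g : α → β} (hs : MeasurableSet s)
    (h : EqOn f g s) : (μ.restrict s).map f = (μ.restrict s).map g :=
  Measure.map_congr ((ae_restrict_iff' hs).mpr (Eventually.of_forall h))

lemma leb01_eq_restrict_Ico : leb01 = volume.restrict (Ico 0 1) :=
  Measure.restrict_congr_set Ico_ae_eq_Icc.symm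

lemma densMeasure_restrict_Ico (f : ℝ → ℝ) :
    (densMeasure f).restrict (Ico 0 1) = densMeasure f := by
  rw [densMeasure, leb01_eq_restrict_Ico, restrict_withDensity measurableSet_Ico,
    Measure.restrict_restrict measurableSet_Ico, inter_self]

lemma densMeasure_restrict_of_eqOn_const {f : ℝ → ℝ} {s : Set ℝ} (hs : MeasurableSet s)
    (hsub : s ⊆ Ico 0 1) {c : ℝ} (hc : EqOn f (fun _ => c) s) :
    (densMeasure f).restrict s = ENNReal.ofReal c • volume.restrict s := by
  rw [densMeasure, leb01_eq_restrict_Ico, restrict_withDensity hs, Measure.restrict_restrict hs,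
    inter_eq_left.mpr hsub, ← withDensity_const]
  exact withDensity_congr_ae <|
    (ae_restrict_iff' hs).mpr (Eventually.of_forall fun x hx => by simp [hc hx])

lemma setIntegral_Icc_eq_toReal_densMeasure_univ {f : ℝ → ℝ} (hf : Measurable f)
    (h0 : ∀ x, 0 ≤ f x) : ∫ x in Icc 0 1, f x = (densMeasure f univ).toReal := by
  rw [densMeasure, withDensity_apply _ MeasurableSet.univ, Measure.restrict_univ, leb01,
    integral_eq_lintegral_of_nonneg_ae (Eventually.of_forall h0) hf.aestronglyMeasurable]

lemma measurable_selEx3 : Measurable selEx3 := by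
  unfold selEx3 fiveXmod1
  refine Measurable.ite measurableSet_Iic (by fun_prop) <|
    Measurable.ite measurableSet_Iio (by fun_prop) <|
    Measurable.ite measurableSet_Iio (by fun_prop) <|
    Measurable.ite measurableSet_Iio (by fun_prop) <|
    Measurable.ite measurableSet_Iio (by fun_prop) (by fun_prop)

lemma selEx3_eqOn_branches :
    EqOn selEx3 (fun x => 6 * x + 0) (Ico 0 (1/10)) ∧
    EqOn selEx3 (fun x => 4 * x + 1/5) (Ico (1/10) (1/5)) ∧
    EqOn selEx3 (fun x => 5 * x + -1) (Ico (1/5) (2/5)) ∧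
    EqOn selEx3 (fun x => 5 * x + -2) (Ico (2/5) (3/5)) ∧
    EqOn selEx3 (fun x => 5 * x + -3) (Ico (3/5) (4/5)) ∧
    EqOn selEx3 (fun x => 5 * x + -4) (Ico (4/5) 1) := by
  refine ⟨?_, ?_, ?_, ?_, ?_, ?_⟩ <;> rintro x ⟨_, _⟩ <;> simp only [selEx3, fiveXmod1] <;>
    split_ifs <;> linarith

lemma densMeasure_fEx3 : densMeasure fEx3 =
    ENNReal.ofReal (30/31) • volume.restrict (Ico 0 (3/5)) +
      ENNReal.ofReal (65/62) • volume.restrict (Ico (3/5) 1) := by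
  rw [← densMeasure_restrict_Ico,
    ← Measure.restrict_Ico_add_restrict_Ico _ (by norm_num : (0:ℝ) ≤ 3/5) (by norm_num),
    densMeasure_restrict_of_eqOn_const (f := fEx3) (c := 30/31) measurableSet_Ico
      (Ico_subset_Ico_right (by norm_num)) (fun x hx => if_pos hx.2),
    densMeasure_restrict_of_eqOn_const (f := fEx3) (c := 65/62) measurableSet_Ico
      (Ico_subset_Ico_left (by norm_num)) (fun x hx => if_neg (not_lt.mpr hx.1))]

lemma densMeasure_fEx3_eq_sum_branches : densMeasure fEx3 =
    ENNReal.ofReal (30/31) • (volume.restrict (Ico 0 (1/10)) +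
      volume.restrict (Ico (1/10) (1/5)) + volume.restrict (Ico (1/5) (2/5)) +
      volume.restrict (Ico (2/5) (3/5))) +
    ENNReal.ofReal (65/62) • (volume.restrict (Ico (3/5) (4/5)) +
      volume.restrict (Ico (4/5) 1)) := by
  rw [densMeasure_fEx3]
  simp (disch := norm_num) only [Measure.restrict_Ico_add_restrict_Ico]

lemma map_selEx3_densMeasure_fEx3 : (densMeasure fEx3).map selEx3 = densMeasure fEx3 := by
  obtain ⟨e₁, e₂, e₃, e₄, e₅, e₆⟩ := selEx3_eqOn_branches
  conv_lhs => rw [densMeasure_fEx3_eq_sum_branches]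
  simp (disch := norm_num) only [Measure.map_add _ _ measurable_selEx3, Measure.map_smul,
    Measure.map_restrict_congr measurableSet_Ico e₁,
    Measure.map_restrict_congr measurableSet_Ico e₂,
    Measure.map_restrict_congr measurableSet_Ico e₃,
    Measure.map_restrict_congr measurableSet_Ico e₄,
    Measure.map_restrict_congr measurableSet_Ico e₅,
    Measure.map_restrict_congr measurableSet_Ico e₆,
    Real.map_volume_restrict_Ico_affine]
  norm_num
  rw [← Measure.restrict_Ico_add_restrict_Ico volume (a := 0) (b := 3/5) (c := 1) (by norm_num)
    (by norm_num), densMeasure_fEx3]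
  match_scalars <;>
  · simp (disch := positivity) only [mul_one, ← ENNReal.ofReal_mul, ← ENNReal.ofReal_add]
    norm_num

lemma isDensity_fEx3 : IsDensity fEx3 := by
  have hm : Measurable fEx3 := Measurable.ite measurableSet_Iio measurable_const measurable_const
  have h0 : ∀ x, 0 ≤ fEx3 x := fun x => by unfold fEx3; split_ifs <;> norm_num
  refine ⟨hm, h0, ?_⟩
  rw [setIntegral_Icc_eq_toReal_densMeasure_univ hm h0, densMeasure_fEx3]
  simp (disch := positivity) only [Measure.add_apply, Measure.smul_apply,
    Measure.restrict_apply_univ, Real.volume_Ico, smul_eq_mul, ← ENNReal.ofReal_mul,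
    ← ENNReal.ofReal_add]
  norm_num

/-- (Example 3 of the paper.)  The function
`f = (30/31)·1_{[0,3/5)} + (65/62)·1_{[3/5,1]}` is a probability density and the measure
`f·λ_Leb` is invariant under the selector `𝝉`. -/
theorem selector_example3_preserves_density :
    IsDensity fEx3 ∧
    ∀ A : Set ℝ, MeasurableSet A →
      densMeasure fEx3 (selEx3 ⁻¹' A) = densMeasure fEx3 A :=
  ⟨isDensity_fEx3, fun A hA => by
    rw [← Measure.map_apply measurable_selEx3 hA, map_selEx3_densMeasure_fEx3]⟩
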